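/- arXiv:1703.04340 — 3 statements merged into one kernel-verified Lean document; each statement's English description precedes it below -/
import Mathlib

section
/- Let R be a (0,4)-tensor on a 4n-dimensional inner product space H with quaternionic structure, satisfying the cyclic (first Bianchi) identity b(X,Y,Z,V) := R(X,Y,Z,V) + R(Y,Z,X,V) + R(Z,X,Y,V) = 2 Σ_{cyc (X,Y,Z)} Σ_α g(I_αX, Y) T(ξ_α, Z, V), where T(ξ_α, Z, V) = −(1/4)[T⁰(I_αZ,V) + T⁰(Z, I_αV)] + U(I_αZ, V), with T⁰ symmetric satisfying Σ_α T⁰(I_αX,I_αY) = −T⁰(X,Y) and U symmetric with U(I_αX, I_αY) = U(X,Y). Then for a unit vector X, b(I₁X, I₂X, I₃X, X) = 2T⁰(X,X) − 6U(X,X). -/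
open scoped RealInnerProductSpace

theorem stmt_16 {H : Type*} [NormedAddCommGroup H] [InnerProductSpace ℝ H]
    [FiniteDimensional ℝ H] (n : ℕ) (hdim : Module.finrank ℝ H = 4 * n)
    (I : Fin 3 → H →ₗ[ℝ] H)
    (hiso : ∀ α (X Y : H), ⟪I α X, I α Y⟫ = ⟪X, Y⟫)
    (h12 : I 0 ∘ₗ I 1 = I 2) (h23 : I 1 ∘ₗ I 2 = I 0) (h31 : I 2 ∘ₗ I 0 = I 1)
    (hsq : ∀ α, I α ∘ₗ I α = -LinearMap.id)
    (hskew : ∀ α (Y : H), ⟪I α Y, Y⟫ = 0)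
    (T0 U : H →ₗ[ℝ] H →ₗ[ℝ] ℝ)
    (hT0sym : ∀ X Y, T0 X Y = T0 Y X)
    (hT0inv : ∀ X Y, T0 X Y + ∑ α, T0 (I α X) (I α Y) = 0)
    (hUsym : ∀ X Y, U X Y = U Y X)
    (hUinv : ∀ α X Y, U (I α X) (I α Y) = U X Y)
    (R : H →ₗ[ℝ] H →ₗ[ℝ] H →ₗ[ℝ] H →ₗ[ℝ] ℝ)
    (hBianchi : ∀ X Y Z W : H,
      R X Y Z W + R Y Z X W + R Z X Y W =
      2 * ∑ α, (⟪I α X, Y⟫ * (-(1/4) * (T0 (I α Z) W + T0 Z (I α W)) + U (I α Z) W)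
        + ⟪I α Y, Z⟫ * (-(1/4) * (T0 (I α X) W + T0 X (I α W)) + U (I α X) W)
        + ⟪I α Z, X⟫ * (-(1/4) * (T0 (I α Y) W + T0 Y (I α W)) + U (I α Y) W)))
    (X : H) (hX : ⟪X, X⟫ = 1) :
    R (I 0 X) (I 1 X) (I 2 X) X + R (I 1 X) (I 2 X) (I 0 X) X
      + R (I 2 X) (I 0 X) (I 1 X) X = 2 * T0 X X - 6 * U X X := by
  have e01 : ∀ v, I 0 (I 1 v) = I 2 v := fun v => by
    rw [← LinearMap.comp_apply, h12]
  have e12 : ∀ v, I 1 (I 2 v) = I 0 v := fun v => by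
    rw [← LinearMap.comp_apply, h23]
  have e20 : ∀ v, I 2 (I 0 v) = I 1 v := fun v => by
    rw [← LinearMap.comp_apply, h31]
  have esq : ∀ α v, I α (I α v) = -v := fun α v => by
    have := LinearMap.ext_iff.mp (hsq α) v
    simpa using this
  have e10 : ∀ v, I 1 (I 0 v) = -(I 2 v) := fun v => by
    rw [← e12 v, esq]
  have e21 : ∀ v, I 2 (I 1 v) = -(I 0 v) := fun v => by
    rw [← e20 v, esq]
  have e02 : ∀ v, I 0 (I 2 v) = -(I 1 v) := fun v => by
    rw [← e01 v, esq]
  have ipXα : ∀ α, ⟪X, I α X⟫ = 0 := fun α => by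
    rw [real_inner_comm]; exact hskew α X
  have ipαX : ∀ α, ⟪I α X, X⟫ = 0 := fun α => hskew α X
  have ipαα : ∀ α, ⟪I α X, I α X⟫ = (1:ℝ) := fun α => by rw [hiso]; exact hX
  have ip12 : ⟪I 1 X, I 2 X⟫ = (0:ℝ) := by
    rw [show I 2 X = -(I 1 (I 0 X)) by rw [e10, neg_neg], inner_neg_right, hiso, ipXα]; ring
  have ip21 : ⟪I 2 X, I 1 X⟫ = (0:ℝ) := by rw [real_inner_comm]; exact ip12
  have ip01 : ⟪I 0 X, I 1 X⟫ = (0:ℝ) := by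
    rw [show I 1 X = -(I 0 (I 2 X)) by rw [e02, neg_neg], inner_neg_right, hiso, ipXα]; ring
  have ip10 : ⟪I 1 X, I 0 X⟫ = (0:ℝ) := by rw [real_inner_comm]; exact ip01
  have ip20 : ⟪I 2 X, I 0 X⟫ = (0:ℝ) := by
    rw [show I 0 X = -(I 2 (I 1 X)) by rw [e21, neg_neg], inner_neg_right, hiso, ipXα]; ring
  have ip02 : ⟪I 0 X, I 2 X⟫ = (0:ℝ) := by rw [real_inner_comm]; exact ip20
  have B := hBianchi (I 0 X) (I 1 X) (I 2 X) X
  rw [Fin.sum_univ_three] at B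
  simp only [e01, e12, e20, e10, e21, e02, esq, inner_neg_left, map_neg,
    LinearMap.neg_apply, inner_neg_right, ipXα, ipXα, ipαα, ip12, ip21, ip01,
    ip10, ip20, ip02] at B
  have hT := hT0inv X X
  rw [Fin.sum_univ_three] at hT
  rw [B]; ring_nf
  ring_nf at hT ⊢
  linarith
end

section
/- Let R be the quaternionic contact curvature of a qc manifold of dimension 4n+3, n > 1, with torsion tensors T⁰, U and normalized scalar curvature S, assumed to satisfy identity (comp1): 3R(X,Y,Z,V) − Σ_α R(I_αX, I_αY, Z, V) equals the explicit right-hand side involving T⁰, U, S of equation (comp1), together with the first Bianchi identity (bian01). Then for every unit horizontal vector X: Σ_{α=1}^3 R(X, I_αX, I_αX, X) = 2T⁰(X,X) + 18U(X,X) + 6S. -/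
/-!
Everything is evaluated on the quaternionic frame `X, I₀X, I₁X, I₂X`. The operator
`L R := ∑ α, R (I α ·) (I α ·) · ·` satisfies `L ∘ L = 3 + 2 L`, so `(3 - L) (1 + L) = 0`: the
instances of the curvature identity at `(X, X, X, X)` and `(I α X, I α X, X, X)` add up to a
relation without curvature terms, which together with `T0 + ∑ α, T0 (I α ·) (I α ·) = 0` forces
`T0 X X = 0`. For a cyclic `(α, β, γ)` the curvature terms of the identity at
`(X, I α X, I α X, X)` and at `(I β X, I γ X, I α X, X)` add up to `4 R X (I α X) (I α X) X` plus
four times a term of the cyclic sum in the Bianchi identity at `(I₀X, I₁X, I₂X, X)`, and that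
identity evaluates the cyclic sum to `-6 U X X`.
-/

open scoped RealInnerProductSpace

/-- `map_neg` does not apply here: instance search fails to find `Neg` on the triply nested
space of linear maps `N →ₗ[𝕜] P →ₗ[𝕜] Q →ₗ[𝕜] 𝕜`. -/
theorem LinearMap.map_neg₄ {𝕜 M N P Q : Type*} [CommRing 𝕜] [AddCommGroup M] [Module 𝕜 M]
    [AddCommMonoid N] [Module 𝕜 N] [AddCommMonoid P] [Module 𝕜 P] [AddCommMonoid Q] [Module 𝕜 Q]
    (R : M →ₗ[𝕜] N →ₗ[𝕜] P →ₗ[𝕜] Q →ₗ[𝕜] 𝕜) (x : M) (y : N) (z : P) (w : Q) :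
    R (-x) y z w = -R x y z w := by
  rw [← neg_one_smul 𝕜 x, map_smul]
  simp only [LinearMap.smul_apply, neg_one_smul, LinearMap.neg_apply]

section

variable {H : Type*} [NormedAddCommGroup H] [InnerProductSpace ℝ H]

structure IsQuaternionicStructure (I : Fin 3 → H →ₗ[ℝ] H) : Prop where
  inner_map_map : ∀ α (X Y : H), ⟪I α X, I α Y⟫ = ⟪X, Y⟫
  comp_zero_one : I 0 ∘ₗ I 1 = I 2
  comp_one_two : I 1 ∘ₗ I 2 = I 0
  comp_two_zero : I 2 ∘ₗ I 0 = I 1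
  comp_self : ∀ α, I α ∘ₗ I α = -LinearMap.id
  inner_map_self : ∀ α (Y : H), ⟪I α Y, Y⟫ = 0

namespace IsQuaternionicStructure

variable {I : Fin 3 → H →ₗ[ℝ] H}

theorem map_map_self (hI : IsQuaternionicStructure I) (α : Fin 3) (v : H) :
    I α (I α v) = -v := by
  simpa using LinearMap.congr_fun (hI.comp_self α) v

theorem map_zero_map_one (hI : IsQuaternionicStructure I) (v : H) : I 0 (I 1 v) = I 2 v :=
  LinearMap.congr_fun hI.comp_zero_one v

theorem map_one_map_two (hI : IsQuaternionicStructure I) (v : H) : I 1 (I 2 v) = I 0 v :=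
  LinearMap.congr_fun hI.comp_one_two v

theorem map_two_map_zero (hI : IsQuaternionicStructure I) (v : H) : I 2 (I 0 v) = I 1 v :=
  LinearMap.congr_fun hI.comp_two_zero v

theorem map_one_map_zero (hI : IsQuaternionicStructure I) (v : H) : I 1 (I 0 v) = -I 2 v := by
  rw [← hI.map_one_map_two, hI.map_map_self]

theorem map_two_map_one (hI : IsQuaternionicStructure I) (v : H) : I 2 (I 1 v) = -I 0 v := by
  rw [← hI.map_two_map_zero, hI.map_map_self]

theorem map_zero_map_two (hI : IsQuaternionicStructure I) (v : H) : I 0 (I 2 v) = -I 1 v := by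
  rw [← hI.map_zero_map_one, hI.map_map_self]

theorem inner_self_map (hI : IsQuaternionicStructure I) (α : Fin 3) (v : H) :
    ⟪v, I α v⟫ = 0 := by
  rw [real_inner_comm, hI.inner_map_self]

theorem inner_map_map_of_ne (hI : IsQuaternionicStructure I) {α β : Fin 3} (h : α ≠ β)
    (v : H) : ⟪I α v, I β v⟫ = 0 := by
  rw [← hI.inner_map_map α, hI.map_map_self]
  fin_cases α <;> fin_cases β <;> first | exact absurd rfl h |
    simp [hI.map_zero_map_one, hI.map_one_map_two, hI.map_two_map_zero, hI.map_one_map_zero,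
      hI.map_two_map_one, hI.map_zero_map_two, hI.inner_self_map]

end IsQuaternionicStructure

/-- The identity (comp1) of the paper. -/
def CurvatureIdentity (I : Fin 3 → H →ₗ[ℝ] H) (T0 U : H →ₗ[ℝ] H →ₗ[ℝ] ℝ) (S : ℝ)
    (R : H →ₗ[ℝ] H →ₗ[ℝ] H →ₗ[ℝ] H →ₗ[ℝ] ℝ) : Prop :=
  ∀ X Y Z W : H,
    3 * R X Y Z W - ∑ α, R (I α X) (I α Y) Z W =
    2 * (⟪Y, Z⟫ * T0 X W + ⟪X, W⟫ * T0 Z Y - ⟪Z, X⟫ * T0 Y W - ⟪W, Y⟫ * T0 Z X)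
    - 2 * ∑ α, (⟪I α Y, Z⟫ * T0 X (I α W) + ⟪I α X, W⟫ * T0 Z (I α Y)
        - ⟪I α Z, X⟫ * T0 Y (I α W) - ⟪I α W, Y⟫ * T0 Z (I α X))
    + ∑ α, (2 * ⟪I α X, Y⟫ * (T0 Z (I α W) - T0 (I α Z) W)
        - 8 * ⟪I α Z, W⟫ * U (I α X) Y - 4 * S * ⟪I α X, Y⟫ * ⟪I α Z, W⟫)

/-- The first Bianchi identity (bian01) of the paper. -/
def BianchiIdentity (I : Fin 3 → H →ₗ[ℝ] H) (T0 U : H →ₗ[ℝ] H →ₗ[ℝ] ℝ)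
    (R : H →ₗ[ℝ] H →ₗ[ℝ] H →ₗ[ℝ] H →ₗ[ℝ] ℝ) : Prop :=
  ∀ X Y Z W : H,
    R X Y Z W + R Y Z X W + R Z X Y W =
    2 * ∑ α, (⟪I α X, Y⟫ * (-(1/4) * (T0 (I α Z) W + T0 Z (I α W)) + U (I α Z) W)
      + ⟪I α Y, Z⟫ * (-(1/4) * (T0 (I α X) W + T0 X (I α W)) + U (I α X) W)
      + ⟪I α Z, X⟫ * (-(1/4) * (T0 (I α Y) W + T0 Y (I α W)) + U (I α Y) W))

variable {I : Fin 3 → H →ₗ[ℝ] H} {T0 U : H →ₗ[ℝ] H →ₗ[ℝ] ℝ} {S : ℝ}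
  {R : H →ₗ[ℝ] H →ₗ[ℝ] H →ₗ[ℝ] H →ₗ[ℝ] ℝ}

theorem CurvatureIdentity.torsion_apply_self_eq_zero (hR : CurvatureIdentity I T0 U S R)
    (hI : IsQuaternionicStructure I) (hT0inv : ∀ X Y, T0 X Y + ∑ α, T0 (I α X) (I α Y) = 0)
    (X : H) : T0 X X = 0 := by
  have h0 := hR X X X X
  have h1 := hR (I 0 X) (I 0 X) X X
  have h2 := hR (I 1 X) (I 1 X) X X
  have h3 := hR (I 2 X) (I 2 X) X X
  have hinv := hT0inv X X
  simp only [Fin.sum_univ_three, hI.map_map_self, hI.map_zero_map_one, hI.map_one_map_two,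
    hI.map_two_map_zero, hI.map_one_map_zero, hI.map_two_map_one, hI.map_zero_map_two,
    hI.inner_map_map, hI.inner_map_self, hI.inner_self_map, hI.inner_map_map_of_ne,
    LinearMap.map_neg₄, map_neg, LinearMap.neg_apply, inner_neg_left, ne_eq, Fin.reduceEq,
    not_false_eq_true] at h0 h1 h2 h3 hinv
  have hq : ⟪X, X⟫ * T0 X X = 0 := by
    linear_combination (1/16) * (h0 + h1 + h2 + h3) + (1/4) * ⟪X, X⟫ * hinv
  rcases eq_or_ne X 0 with rfl | hX
  · simp
  · exact (mul_eq_zero.mp hq).resolve_left (inner_self_ne_zero.mpr hX)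

theorem CurvatureIdentity.sum_add_cyclic_eq (hR : CurvatureIdentity I T0 U S R)
    (hI : IsQuaternionicStructure I) (hT0 : ∀ Y, T0 Y Y = 0)
    (hUinv : ∀ α X Y, U (I α X) (I α Y) = U X Y) (X : H) :
    ∑ α, R X (I α X) (I α X) X
      + (R (I 0 X) (I 1 X) (I 2 X) X + R (I 1 X) (I 2 X) (I 0 X) X + R (I 2 X) (I 0 X) (I 1 X) X)
      = 12 * ⟪X, X⟫ * U X X + 6 * ⟪X, X⟫ ^ 2 * S := by
  have h0 := hR X (I 0 X) (I 0 X) X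
  have h1 := hR X (I 1 X) (I 1 X) X
  have h2 := hR X (I 2 X) (I 2 X) X
  have c0 := hR (I 1 X) (I 2 X) (I 0 X) X
  have c1 := hR (I 2 X) (I 0 X) (I 1 X) X
  have c2 := hR (I 0 X) (I 1 X) (I 2 X) X
  simp only [Fin.sum_univ_three, hI.map_map_self, hI.map_zero_map_one, hI.map_one_map_two,
    hI.map_two_map_zero, hI.map_one_map_zero, hI.map_two_map_one, hI.map_zero_map_two,
    hI.inner_map_map, hI.inner_map_self, hI.inner_self_map, hI.inner_map_map_of_ne,
    LinearMap.map_neg₄, map_neg, LinearMap.neg_apply, inner_neg_left, ne_eq, Fin.reduceEq,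
    not_false_eq_true, hT0, hUinv] at h0 h1 h2 c0 c1 c2 ⊢
  linear_combination (1/4) * (h0 + h1 + h2 + c0 + c1 + c2)

theorem BianchiIdentity.cyclic_eq (hB : BianchiIdentity I T0 U R)
    (hI : IsQuaternionicStructure I) (hT0 : ∀ Y, T0 Y Y = 0) (X : H) :
    R (I 0 X) (I 1 X) (I 2 X) X + R (I 1 X) (I 2 X) (I 0 X) X + R (I 2 X) (I 0 X) (I 1 X) X
      = -6 * ⟪X, X⟫ * U X X := by
  have h := hB (I 0 X) (I 1 X) (I 2 X) X
  simp only [Fin.sum_univ_three, hI.map_map_self, hI.map_zero_map_one, hI.map_one_map_two,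
    hI.map_two_map_zero, hI.map_one_map_zero, hI.map_two_map_one, hI.map_zero_map_two,
    hI.inner_map_map, hI.inner_self_map, hI.inner_map_map_of_ne, map_neg, LinearMap.neg_apply,
    inner_neg_left, ne_eq, Fin.reduceEq, not_false_eq_true, hT0] at h
  linear_combination h

end

theorem stmt_17_general {H : Type*} [NormedAddCommGroup H] [InnerProductSpace ℝ H]
    (I : Fin 3 → H →ₗ[ℝ] H)
    (hiso : ∀ α (X Y : H), ⟪I α X, I α Y⟫ = ⟪X, Y⟫)
    (h12 : I 0 ∘ₗ I 1 = I 2) (h23 : I 1 ∘ₗ I 2 = I 0) (h31 : I 2 ∘ₗ I 0 = I 1)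
    (hsq : ∀ α, I α ∘ₗ I α = -LinearMap.id)
    (hskew : ∀ α (Y : H), ⟪I α Y, Y⟫ = 0)
    (T0 U : H →ₗ[ℝ] H →ₗ[ℝ] ℝ) (S : ℝ)
    (hT0inv : ∀ X Y, T0 X Y + ∑ α, T0 (I α X) (I α Y) = 0)
    (hUinv : ∀ α X Y, U (I α X) (I α Y) = U X Y)
    (R : H →ₗ[ℝ] H →ₗ[ℝ] H →ₗ[ℝ] H →ₗ[ℝ] ℝ)
    (hcomp1 : ∀ X Y Z W : H,
      3 * R X Y Z W - ∑ α, R (I α X) (I α Y) Z W =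
      2 * (⟪Y, Z⟫ * T0 X W + ⟪X, W⟫ * T0 Z Y - ⟪Z, X⟫ * T0 Y W - ⟪W, Y⟫ * T0 Z X)
      - 2 * ∑ α, (⟪I α Y, Z⟫ * T0 X (I α W) + ⟪I α X, W⟫ * T0 Z (I α Y)
          - ⟪I α Z, X⟫ * T0 Y (I α W) - ⟪I α W, Y⟫ * T0 Z (I α X))
      + ∑ α, (2 * ⟪I α X, Y⟫ * (T0 Z (I α W) - T0 (I α Z) W)
          - 8 * ⟪I α Z, W⟫ * U (I α X) Y - 4 * S * ⟪I α X, Y⟫ * ⟪I α Z, W⟫))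
    (hBianchi : ∀ X Y Z W : H,
      R X Y Z W + R Y Z X W + R Z X Y W =
      2 * ∑ α, (⟪I α X, Y⟫ * (-(1/4) * (T0 (I α Z) W + T0 Z (I α W)) + U (I α Z) W)
        + ⟪I α Y, Z⟫ * (-(1/4) * (T0 (I α X) W + T0 X (I α W)) + U (I α X) W)
        + ⟪I α Z, X⟫ * (-(1/4) * (T0 (I α Y) W + T0 Y (I α W)) + U (I α Y) W)))
    (X : H) (hX : ⟪X, X⟫ = 1) :
    ∑ α, R X (I α X) (I α X) X = 2 * T0 X X + 18 * U X X + 6 * S := by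
  have hI : IsQuaternionicStructure I := ⟨hiso, h12, h23, h31, hsq, hskew⟩
  have hR : CurvatureIdentity I T0 U S R := hcomp1
  have hT0 : ∀ Y, T0 Y Y = 0 := hR.torsion_apply_self_eq_zero hI hT0inv
  have hsum := hR.sum_add_cyclic_eq hI hT0 hUinv X
  rw [BianchiIdentity.cyclic_eq hBianchi hI hT0 X, hX] at hsum
  rw [hT0]
  linarith

theorem stmt_17 {H : Type*} [NormedAddCommGroup H] [InnerProductSpace ℝ H]
    [FiniteDimensional ℝ H] (n : ℕ) (hn : 1 < n) (hdim : Module.finrank ℝ H = 4 * n)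
    (I : Fin 3 → H →ₗ[ℝ] H)
    (hiso : ∀ α (X Y : H), ⟪I α X, I α Y⟫ = ⟪X, Y⟫)
    (h12 : I 0 ∘ₗ I 1 = I 2) (h23 : I 1 ∘ₗ I 2 = I 0) (h31 : I 2 ∘ₗ I 0 = I 1)
    (hsq : ∀ α, I α ∘ₗ I α = -LinearMap.id)
    (hskew : ∀ α (Y : H), ⟪I α Y, Y⟫ = 0)
    (T0 U : H →ₗ[ℝ] H →ₗ[ℝ] ℝ) (S : ℝ)
    (hT0sym : ∀ X Y, T0 X Y = T0 Y X)
    (hT0inv : ∀ X Y, T0 X Y + ∑ α, T0 (I α X) (I α Y) = 0)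
    (hUsym : ∀ X Y, U X Y = U Y X)
    (hUinv : ∀ α X Y, U (I α X) (I α Y) = U X Y)
    (R : H →ₗ[ℝ] H →ₗ[ℝ] H →ₗ[ℝ] H →ₗ[ℝ] ℝ)
    (hcomp1 : ∀ X Y Z W : H,
      3 * R X Y Z W - ∑ α, R (I α X) (I α Y) Z W =
      2 * (⟪Y, Z⟫ * T0 X W + ⟪X, W⟫ * T0 Z Y - ⟪Z, X⟫ * T0 Y W - ⟪W, Y⟫ * T0 Z X)
      - 2 * ∑ α, (⟪I α Y, Z⟫ * T0 X (I α W) + ⟪I α X, W⟫ * T0 Z (I α Y)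
          - ⟪I α Z, X⟫ * T0 Y (I α W) - ⟪I α W, Y⟫ * T0 Z (I α X))
      + ∑ α, (2 * ⟪I α X, Y⟫ * (T0 Z (I α W) - T0 (I α Z) W)
          - 8 * ⟪I α Z, W⟫ * U (I α X) Y - 4 * S * ⟪I α X, Y⟫ * ⟪I α Z, W⟫))
    (hBianchi : ∀ X Y Z W : H,
      R X Y Z W + R Y Z X W + R Z X Y W =
      2 * ∑ α, (⟪I α X, Y⟫ * (-(1/4) * (T0 (I α Z) W + T0 Z (I α W)) + U (I α Z) W)
        + ⟪I α Y, Z⟫ * (-(1/4) * (T0 (I α X) W + T0 X (I α W)) + U (I α X) W)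
        + ⟪I α Z, X⟫ * (-(1/4) * (T0 (I α Y) W + T0 Y (I α W)) + U (I α Y) W)))
    (X : H) (hX : ⟪X, X⟫ = 1) :
    ∑ α, R X (I α X) (I α X) X = 2 * T0 X X + 18 * U X X + 6 * S :=
  stmt_17_general I hiso h12 h23 h31 hsq hskew T0 U S hT0inv hUinv R hcomp1 hBianchi X hX
end

section
/- Under the hypotheses of the previous statement, together with the Ricci identity Ric(X,X) = (2n+2)T⁰(X,X) + (4n+10)U(X,X) + 2(n+2)S g(X,X), one has for every unit horizontal vector X: Ric(X,X) − Σ_{α=1}^3 R(X, I_αX, I_αX, X) = 2n T⁰(X,X) + (4n−8) U(X,X) + 2(n−1) S. -/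
open scoped RealInnerProductSpace

set_option maxHeartbeats 2000000 in
theorem stmt_18 {H : Type*} [NormedAddCommGroup H] [InnerProductSpace ℝ H]
    [FiniteDimensional ℝ H] (n : ℕ) (hn : 1 < n) (hdim : Module.finrank ℝ H = 4 * n)
    (I : Fin 3 → H →ₗ[ℝ] H)
    (hiso : ∀ α (X Y : H), ⟪I α X, I α Y⟫ = ⟪X, Y⟫)
    (h12 : I 0 ∘ₗ I 1 = I 2) (h23 : I 1 ∘ₗ I 2 = I 0) (h31 : I 2 ∘ₗ I 0 = I 1)
    (hsq : ∀ α, I α ∘ₗ I α = -LinearMap.id)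
    (hskew : ∀ α (Y : H), ⟪I α Y, Y⟫ = 0)
    (T0 U : H →ₗ[ℝ] H →ₗ[ℝ] ℝ) (S : ℝ)
    (hT0sym : ∀ X Y, T0 X Y = T0 Y X)
    (hT0inv : ∀ X Y, T0 X Y + ∑ α, T0 (I α X) (I α Y) = 0)
    (hUsym : ∀ X Y, U X Y = U Y X)
    (hUinv : ∀ α X Y, U (I α X) (I α Y) = U X Y)
    (R : H →ₗ[ℝ] H →ₗ[ℝ] H →ₗ[ℝ] H →ₗ[ℝ] ℝ)
    (hcomp1 : ∀ X Y Z W : H,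
      3 * R X Y Z W - ∑ α, R (I α X) (I α Y) Z W =
      2 * (⟪Y, Z⟫ * T0 X W + ⟪X, W⟫ * T0 Z Y - ⟪Z, X⟫ * T0 Y W - ⟪W, Y⟫ * T0 Z X)
      - 2 * ∑ α, (⟪I α Y, Z⟫ * T0 X (I α W) + ⟪I α X, W⟫ * T0 Z (I α Y)
          - ⟪I α Z, X⟫ * T0 Y (I α W) - ⟪I α W, Y⟫ * T0 Z (I α X))
      + ∑ α, (2 * ⟪I α X, Y⟫ * (T0 Z (I α W) - T0 (I α Z) W)
          - 8 * ⟪I α Z, W⟫ * U (I α X) Y - 4 * S * ⟪I α X, Y⟫ * ⟪I α Z, W⟫))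
    (hBianchi : ∀ X Y Z W : H,
      R X Y Z W + R Y Z X W + R Z X Y W =
      2 * ∑ α, (⟪I α X, Y⟫ * (-(1/4) * (T0 (I α Z) W + T0 Z (I α W)) + U (I α Z) W)
        + ⟪I α Y, Z⟫ * (-(1/4) * (T0 (I α X) W + T0 X (I α W)) + U (I α X) W)
        + ⟪I α Z, X⟫ * (-(1/4) * (T0 (I α Y) W + T0 Y (I α W)) + U (I α Y) W)))
    (Ric : H →ₗ[ℝ] H →ₗ[ℝ] ℝ)
    (hRic : ∀ X : H, Ric X X = (2 * (n : ℝ) + 2) * T0 X X + (4 * (n : ℝ) + 10) * U X X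
      + 2 * ((n : ℝ) + 2) * S * ⟪X, X⟫)
    (X : H) (hX : ⟪X, X⟫ = 1) :
    Ric X X - ∑ α, R X (I α X) (I α X) X =
      2 * (n : ℝ) * T0 X X + (4 * (n : ℝ) - 8) * U X X + 2 * ((n : ℝ) - 1) * S := by
  have sq : ∀ α (v : H), I α (I α v) = -v := by
    intro α v
    have := LinearMap.ext_iff.mp (hsq α) v
    simpa using this
  have e01 : I 0 (I 1 X) = I 2 X := by
    have := LinearMap.ext_iff.mp h12 X; simpa using this
  have e12 : I 1 (I 2 X) = I 0 X := by
    have := LinearMap.ext_iff.mp h23 X; simpa using this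
  have e20 : I 2 (I 0 X) = I 1 X := by
    have := LinearMap.ext_iff.mp h31 X; simpa using this
  have e10 : I 1 (I 0 X) = -(I 2 X) := by rw [← e12, sq]
  have e21 : I 2 (I 1 X) = -(I 0 X) := by rw [← e20, sq]
  have e02 : I 0 (I 2 X) = -(I 1 X) := by rw [← e01, sq]
  have sq0 : I 0 (I 0 X) = -X := sq 0 X
  have sq1 : I 1 (I 1 X) = -X := sq 1 X
  have sq2 : I 2 (I 2 X) = -X := sq 2 X
  have n0 : (⟪I 0 X, I 0 X⟫ : ℝ) = 1 := by rw [hiso]; exact hX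
  have n1 : (⟪I 1 X, I 1 X⟫ : ℝ) = 1 := by rw [hiso]; exact hX
  have n2 : (⟪I 2 X, I 2 X⟫ : ℝ) = 1 := by rw [hiso]; exact hX
  have z0 : (⟪I 0 X, X⟫ : ℝ) = 0 := hskew 0 X
  have z1 : (⟪I 1 X, X⟫ : ℝ) = 0 := hskew 1 X
  have z2 : (⟪I 2 X, X⟫ : ℝ) = 0 := hskew 2 X
  have z0' : (⟪X, I 0 X⟫ : ℝ) = 0 := by rw [real_inner_comm]; exact z0
  have z1' : (⟪X, I 1 X⟫ : ℝ) = 0 := by rw [real_inner_comm]; exact z1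
  have z2' : (⟪X, I 2 X⟫ : ℝ) = 0 := by rw [real_inner_comm]; exact z2
  have ip01 : (⟪I 0 X, I 1 X⟫ : ℝ) = 0 := by
    rw [← hiso 1 (I 0 X) (I 1 X), e10, sq1, inner_neg_neg]; exact z2
  have ip12 : (⟪I 1 X, I 2 X⟫ : ℝ) = 0 := by
    rw [← hiso 2 (I 1 X) (I 2 X), e21, sq2, inner_neg_neg]; exact z0
  have ip02 : (⟪I 0 X, I 2 X⟫ : ℝ) = 0 := by
    rw [← hiso 0 (I 0 X) (I 2 X), sq0, e02, inner_neg_neg]; exact z1'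
  have ip10 : (⟪I 1 X, I 0 X⟫ : ℝ) = 0 := by rw [real_inner_comm]; exact ip01
  have ip21 : (⟪I 2 X, I 1 X⟫ : ℝ) = 0 := by rw [real_inner_comm]; exact ip12
  have ip20 : (⟪I 2 X, I 0 X⟫ : ℝ) = 0 := by rw [real_inner_comm]; exact ip02
  have A0 := hcomp1 X X X X
  have A1 := hcomp1 X (I 0 X) (I 0 X) X
  have A2 := hcomp1 X (I 1 X) (I 1 X) X
  have A3 := hcomp1 X (I 2 X) (I 2 X) X
  have B0 := hBianchi X X X X
  have B1 := hBianchi X (I 0 X) (I 0 X) X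
  have B2 := hBianchi X (I 1 X) (I 1 X) X
  have B3 := hBianchi X (I 2 X) (I 2 X) X
  have B4 := hBianchi (I 0 X) (I 1 X) (I 2 X) X
  have B5 := hBianchi (I 0 X) (I 2 X) (I 1 X) X
  have hric := hRic X
  have hti := hT0inv X X
  have hu0 := hUinv 0 X X
  have hu1 := hUinv 1 X X
  have hu2 := hUinv 2 X X
  simp only [Fin.sum_univ_three, sq0, sq1, sq2, e01, e12, e20, e10, e21, e02,
    map_neg, LinearMap.neg_apply, inner_neg_left, inner_neg_right, neg_neg,
    hX, n0, n1, n2, z0, z1, z2, z0', z1', z2', ip01, ip12, ip02, ip10, ip21, ip20]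
    at A0 A1 A2 A3 B0 B1 B2 B3 B4 B5 hric hti hu0 hu1 hu2 ⊢
  linarith [A0, A1, A2, A3, B0, B1, B2, B3, B4, B5, hric, hti, hu0, hu1, hu2,
    hT0sym X (I 0 X), hT0sym X (I 1 X), hT0sym X (I 2 X),
    hT0sym (I 0 X) (I 1 X), hT0sym (I 0 X) (I 2 X), hT0sym (I 1 X) (I 2 X),
    hUsym X (I 0 X), hUsym X (I 1 X), hUsym X (I 2 X),
    hUsym (I 0 X) (I 1 X), hUsym (I 0 X) (I 2 X), hUsym (I 1 X) (I 2 X)]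
end
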